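/- Let g : [0,T] → ℝ be continuously differentiable, let N ≥ 1, τ = T/N, t_k = kτ, and 0 < α < 1. Then the quadrature error γ_α^n = (1/Γ(α)) ∑_{k=1}^n ∫_{t_{k-1}}^{t_k} (t_n - s)^{α-1} (g(s) - g(t_k)) ds satisfies |γ_α^n| ≤ (N^α τ^{α+1} / Γ(α+1)) · sup_{t ∈ [0,T]} |g'(t)| for every 1 ≤ n ≤ N. -/

import Mathlib

/-!
On the cell `[t_{k-1}, t_k]` the mean value theorem gives `|g s - g t_k| ≤ τ M`, and the kernel
`(t_n - s)^{α-1}` is nonnegative, so the error is at most `τ M / Γ(α)` times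
`∑ₖ ∫_{t_{k-1}}^{t_k} (t_n - s)^{α-1} ds = ∫_0^{t_n} (t_n - s)^{α-1} ds = t_n^α / α`.
Finally `t_n^α ≤ (N τ)^α` and `α Γ(α) = Γ(α + 1)`.
-/

open MeasureTheory intervalIntegral

lemma intervalIntegrable_sub_rpow {β : ℝ} (hβ : -1 < β) (c a b : ℝ) :
    IntervalIntegrable (fun s => (c - s) ^ β) volume a b := by
  simpa using (intervalIntegrable_rpow' hβ (a := c - a) (b := c - b)).comp_sub_left c

lemma integral_sub_rpow_sub_one {α : ℝ} (hα : 0 < α) (c : ℝ) :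
    ∫ s in (0 : ℝ)..c, (c - s) ^ (α - 1) = c ^ α / α := by
  rw [integral_comp_sub_left (fun x => x ^ (α - 1)) c, sub_self, sub_zero,
    integral_rpow (Or.inl (by linarith)), sub_add_cancel, Real.zero_rpow hα.ne', sub_zero]

lemma sum_integral_uniform_grid {f : ℝ → ℝ} (hf : ∀ a b, IntervalIntegrable f volume a b)
    (τ : ℝ) (n : ℕ) :
    ∑ k ∈ Finset.Icc 1 n, ∫ s in ((k : ℝ) - 1) * τ..(k : ℝ) * τ, f s
      = ∫ s in (0 : ℝ)..n * τ, f s := by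
  induction n with
  | zero => simp
  | succ n ih =>
    rw [Finset.sum_Icc_succ_top (Nat.le_add_left 1 n), ih, Nat.cast_succ, add_sub_cancel_right,
      integral_add_adjacent_intervals (hf _ _) (hf _ _)]

lemma abs_integral_mul_le_mul_integral {w h : ℝ → ℝ} {a b L : ℝ} (hab : a ≤ b)
    (hw : IntervalIntegrable w volume a b)
    (hwh : ∀ s ∈ Set.Ioc a b, 0 ≤ w s ∧ |h s| ≤ L) :
    |∫ s in a..b, w s * h s| ≤ L * ∫ s in a..b, w s := by
  rw [← intervalIntegral.integral_const_mul, ← Real.norm_eq_abs]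
  refine norm_integral_le_of_norm_le hab (Filter.Eventually.of_forall fun s hs => ?_)
    (hw.const_mul L)
  obtain ⟨hw0, hhL⟩ := hwh s hs
  rw [Real.norm_eq_abs, abs_mul, abs_of_nonneg hw0, mul_comm L]
  exact mul_le_mul_of_nonneg_left hhL hw0

lemma abs_sum_integral_kernel_mul_le {α τ L : ℝ} (hα : 0 < α) (hτ : 0 ≤ τ) {n : ℕ}
    (h : ℕ → ℝ → ℝ)
    (hh : ∀ k ∈ Finset.Icc 1 n, ∀ s ∈ Set.Ioc (((k : ℝ) - 1) * τ) ((k : ℝ) * τ),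
      |h k s| ≤ L) :
    |∑ k ∈ Finset.Icc 1 n, ∫ s in ((k : ℝ) - 1) * τ..(k : ℝ) * τ,
        ((n : ℝ) * τ - s) ^ (α - 1) * h k s|
      ≤ L * ((n * τ) ^ α / α) := by
  have hint := intervalIntegrable_sub_rpow (show -1 < α - 1 by linarith) ((n : ℝ) * τ)
  calc _ ≤ ∑ k ∈ Finset.Icc 1 n, L * ∫ s in ((k : ℝ) - 1) * τ..(k : ℝ) * τ,
          ((n : ℝ) * τ - s) ^ (α - 1) := by
        refine (Finset.abs_sum_le_sum_abs _ _).trans (Finset.sum_le_sum fun k hk => ?_)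
        have hkn : (k : ℝ) ≤ n := by exact_mod_cast (Finset.mem_Icc.1 hk).2
        refine abs_integral_mul_le_mul_integral (by nlinarith) (hint _ _) fun s hs =>
          ⟨Real.rpow_nonneg (by nlinarith [hs.2]) _, hh k hk s hs⟩
    _ = L * ((n * τ) ^ α / α) := by
      rw [← Finset.mul_sum, sum_integral_uniform_grid hint, integral_sub_rpow_sub_one hα]

lemma abs_sub_le_of_mem_grid_cell {g g' : ℝ → ℝ} {T τ M : ℝ} {N k : ℕ} (hNτ : N * τ = T)
    (hτ : 0 ≤ τ) (hg : ∀ t ∈ Set.Icc (0 : ℝ) T, HasDerivAt g (g' t) t)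
    (hM : ∀ t ∈ Set.Icc (0 : ℝ) T, |g' t| ≤ M) (hk1 : 1 ≤ k) (hkN : k ≤ N) {s : ℝ}
    (hs : s ∈ Set.Ioc (((k : ℝ) - 1) * τ) ((k : ℝ) * τ)) :
    |g s - g ((k : ℝ) * τ)| ≤ M * τ := by
  have hk1' : (1 : ℝ) ≤ k := by exact_mod_cast hk1
  have hkT : (k : ℝ) * τ ≤ T := hNτ ▸ mul_le_mul_of_nonneg_right (by exact_mod_cast hkN) hτ
  have hs0T : s ∈ Set.Icc (0 : ℝ) T := ⟨by nlinarith [hs.1], hs.2.trans hkT⟩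
  have hlip := (convex_Icc (0 : ℝ) T).norm_image_sub_le_of_norm_hasDerivWithin_le
    (fun t ht => (hg t ht).hasDerivWithinAt) hM ⟨by nlinarith, hkT⟩ hs0T
  rw [Real.norm_eq_abs, Real.norm_eq_abs, abs_sub_comm s,
    abs_of_nonneg (a := (k : ℝ) * τ - s) (by linarith [hs.2])] at hlip
  have hM0 : 0 ≤ M := (abs_nonneg _).trans (hM s hs0T)
  exact hlip.trans (mul_le_mul_of_nonneg_left (by linarith [hs.1]) hM0)

theorem stmt_5_general (T : ℝ) (hT : 0 < T) (N : ℕ) (τ : ℝ) (hτ : τ = T / N)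
    (α : ℝ) (hα0 : 0 < α)
    (g g' : ℝ → ℝ)
    (hg : ∀ t ∈ Set.Icc (0 : ℝ) T, HasDerivAt g (g' t) t)
    (M : ℝ) (hM : ∀ t ∈ Set.Icc (0 : ℝ) T, |g' t| ≤ M) :
    ∀ n : ℕ, 1 ≤ n → n ≤ N →
      |(1 / Real.Gamma α) * ∑ k ∈ Finset.Icc 1 n,
          ∫ s in ((k : ℝ) - 1) * τ..(k : ℝ) * τ,
            ((n : ℝ) * τ - s) ^ (α - 1) * (g s - g ((k : ℝ) * τ))|
        ≤ (N : ℝ) ^ α * τ ^ (α + 1) / Real.Gamma (α + 1) * M := by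
  intro n hn hnN
  have hnN' : (n : ℝ) ≤ N := by exact_mod_cast hnN
  have hN : (0 : ℝ) < N := by exact_mod_cast hn.trans hnN
  have hτ0 : 0 < τ := by rw [hτ]; positivity
  have hNτ : (N : ℝ) * τ = T := by rw [hτ]; field_simp
  have hM0 : 0 ≤ M := (abs_nonneg _).trans (hM 0 ⟨le_rfl, hT.le⟩)
  have hΓ : 0 < Real.Gamma α := Real.Gamma_pos_of_pos hα0
  have hpow : ((n : ℝ) * τ) ^ α ≤ (N : ℝ) ^ α * τ ^ α := by
    rw [← Real.mul_rpow hN.le hτ0.le]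
    gcongr
  calc _ = 1 / Real.Gamma α * |∑ k ∈ Finset.Icc 1 n,
          ∫ s in ((k : ℝ) - 1) * τ..(k : ℝ) * τ,
            ((n : ℝ) * τ - s) ^ (α - 1) * (g s - g ((k : ℝ) * τ))| := by
        rw [abs_mul, abs_of_pos (by positivity)]
    _ ≤ 1 / Real.Gamma α * (M * τ * (((n : ℝ) * τ) ^ α / α)) := by
        gcongr
        exact abs_sum_integral_kernel_mul_le hα0 hτ0.le _ fun k hk s hs =>
          abs_sub_le_of_mem_grid_cell hNτ hτ0.le hg hM (Finset.mem_Icc.1 hk).1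
            ((Finset.mem_Icc.1 hk).2.trans hnN) hs
    _ ≤ 1 / Real.Gamma α * (M * τ * ((N : ℝ) ^ α * τ ^ α / α)) := by gcongr
    _ = (N : ℝ) ^ α * τ ^ (α + 1) / Real.Gamma (α + 1) * M := by
        rw [Real.Gamma_add_one hα0.ne', Real.rpow_add_one hτ0.ne']
        field_simp

theorem stmt_5 (T : ℝ) (hT : 0 < T) (N : ℕ) (hN : 1 ≤ N) (τ : ℝ) (hτ : τ = T / N)
    (α : ℝ) (hα0 : 0 < α) (hα1 : α < 1)
    (g g' : ℝ → ℝ)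
    (hg : ∀ t ∈ Set.Icc (0 : ℝ) T, HasDerivAt g (g' t) t)
    (hg' : ContinuousOn g' (Set.Icc (0 : ℝ) T))
    (M : ℝ) (hM : ∀ t ∈ Set.Icc (0 : ℝ) T, |g' t| ≤ M) :
    ∀ n : ℕ, 1 ≤ n → n ≤ N →
      |(1 / Real.Gamma α) * ∑ k ∈ Finset.Icc 1 n,
          ∫ s in ((k : ℝ) - 1) * τ..(k : ℝ) * τ,
            ((n : ℝ) * τ - s) ^ (α - 1) * (g s - g ((k : ℝ) * τ))|
        ≤ (N : ℝ) ^ α * τ ^ (α + 1) / Real.Gamma (α + 1) * M :=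
  stmt_5_general T hT N τ hτ α hα0 g g' hg M hM
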